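/- Let w ≠ id be a permutation with ℓ = ℓ(w), and set w_j = φ^{ℓ−j}(w) for 0 ≤ j ≤ ℓ (this is well defined: each application of φ strictly decreases the length by 1, so w_j ≠ id for j ≥ 1). Then w_0 = id, w_{j−1} ⋖_{κ(w_j)} w_j for every 1 ≤ j ≤ ℓ, and the labels satisfy d₁(w) ≤ κ(w_1) ≤ κ(w_2) ≤ ⋯ ≤ κ(w_ℓ) = κ(w). -/

import Mathlib

/-- A permutation of the positive integers, modeled as a permutation of `ℕ`
fixing `0` (and, separately assumed, all but finitely many points). -/
def FinPerm (w : Equiv.Perm ℕ) : Prop :=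
  w 0 = 0 ∧ {i : ℕ | w i ≠ i}.Finite

/-- The length `ℓ(w)`: the number of inversions, i.e. pairs `i < j` with `w i > w j`. -/
noncomputable def len (w : Equiv.Perm ℕ) : ℕ :=
  {p : ℕ × ℕ | p.1 < p.2 ∧ w p.2 < w p.1}.ncard

/-- The set of descents: positions `i ≥ 1` with `w i > w (i+1)`. -/
def descents (w : Equiv.Perm ℕ) : Set ℕ :=
  {i : ℕ | 0 < i ∧ w (i + 1) < w i}

/-- `d₁(w)`: the first (smallest) descent of `w`. -/
noncomputable def d1 (w : Equiv.Perm ℕ) : ℕ := sInf (descents w)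

/-- `d₂(w)`: the last (largest) descent of `w`. -/
noncomputable def d2 (w : Equiv.Perm ℕ) : ℕ := sSup (descents w)

/-- `kCover k ρ π` means `ρ ⋖_k π`:  `π = ρ t_{a b}` for some positive
`a ≤ k < b`, with `ℓ(π) = ℓ(ρ) + 1`. -/
def kCover (k : ℕ) (ρ π : Equiv.Perm ℕ) : Prop :=
  ∃ a b : ℕ, 0 < a ∧ a ≤ k ∧ k < b ∧ π = ρ * Equiv.swap a b ∧ len π = len ρ + 1


/-- `i(w)`: the largest position `i` with `w⁻¹(w(i)+1) < i`. -/
noncomputable def iw (w : Equiv.Perm ℕ) : ℕ :=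
  sSup {i : ℕ | 0 < i ∧ w⁻¹ (w i + 1) < i}

/-- `φ(w) = t_{w(i(w)), w(i(w))+1} ∘ w`, swapping the values `w(i(w))` and `w(i(w))+1`. -/
noncomputable def phi (w : Equiv.Perm ℕ) : Equiv.Perm ℕ :=
  Equiv.swap (w (iw w)) (w (iw w) + 1) * w

/-- `κ(w) = i(w) - 1`. -/
noncomputable def kappa (w : Equiv.Perm ℕ) : ℕ := iw w - 1

/-!
`φ` swaps the adjacent values `a = w i` and `a + 1`, where `i = i(w)` and `a + 1` sits at
`p = w⁻¹ (a + 1) < i`. This is right multiplication by `t_{p i}`, and it removes the inversion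
`(p, i)` and no other, so `ℓ` drops by one and `φ w ⋖_k w` with `k = i - 1 ≥ p`. As inversions only
disappear along the chain, no descents appear, so `d₁` can only grow; and `w` has a descent
between `p` and `i`, whence `d₁ ≤ κ`. Finally, `φ` creates no candidate positions beyond `i(w)`,
so `κ` weakly decreases along `φ`.
-/

open Equiv

lemma Equiv.Perm.eq_one_of_strictMono {α : Type*} [LinearOrder α] [WellFoundedLT α]
    {f : Perm α} (hf : StrictMono f) : f = 1 := by
  ext x
  exact congrArg (· x) (Subsingleton.elim (hf.orderIsoOfSurjective f f.surjective) (OrderIso.refl α))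

lemma swap_succ_apply_lt_swap_succ_apply_iff {a s t : ℕ} (hs : s = a → t ≠ a + 1)
    (ht : s = a + 1 → t ≠ a) : swap a (a + 1) s < swap a (a + 1) t ↔ s < t := by
  rw [swap_apply_def, swap_apply_def]
  split_ifs <;> omega

lemma exists_descent_of_lt {u : ℕ → ℕ} {p i : ℕ} (hpi : p ≤ i) (hu : u i < u p) :
    ∃ q, p ≤ q ∧ q < i ∧ u (q + 1) < u q := by
  induction i, hpi using Nat.le_induction with
  | base => exact absurd hu (lt_irrefl _)
  | succ i hpi ih =>
    by_cases hdesc : u (i + 1) < u i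
    · exact ⟨i, hpi, i.lt_succ_self, hdesc⟩
    · obtain ⟨q, hpq, hqi, hq⟩ := ih (by omega)
      exact ⟨q, hpq, by omega, hq⟩

def inversions (w : Perm ℕ) : Set (ℕ × ℕ) :=
  {p : ℕ × ℕ | p.1 < p.2 ∧ w p.2 < w p.1}

lemma len_eq_ncard_inversions (w : Perm ℕ) : len w = (inversions w).ncard := rfl

lemma len_one : len 1 = 0 := by
  have : inversions 1 = ∅ := Set.eq_empty_of_forall_notMem fun _ hp => lt_asymm hp.1 hp.2
  rw [len_eq_ncard_inversions, this, Set.ncard_empty]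

lemma descents_subset_of_inversions_subset {v w : Perm ℕ} (h : inversions v ⊆ inversions w) :
    descents v ⊆ descents w :=
  fun q ⟨hq, hdesc⟩ => ⟨hq, (h (a := (q, q + 1)) ⟨q.lt_succ_self, hdesc⟩).2⟩

/-- Swapping the adjacent values `w i` and `w i + 1` preserves the relative order of every other
pair of values. -/
lemma inversions_eq_insert_inversions_swap_mul (w : Perm ℕ) {i : ℕ} (h : w⁻¹ (w i + 1) < i) :
    inversions w = insert (w⁻¹ (w i + 1), i) (inversions (swap (w i) (w i + 1) * w)) := by
  ext ⟨x, y⟩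
  simp only [inversions, Set.mem_insert_iff, Set.mem_ofPred_eq, Prod.mk.injEq, Perm.mul_apply]
  by_cases hxy : x = w⁻¹ (w i + 1) ∧ y = i
  · obtain ⟨rfl, rfl⟩ := hxy
    simpa using h
  rw [or_iff_right hxy]
  refine and_congr_right fun hlt => (swap_succ_apply_lt_swap_succ_apply_iff ?_ ?_).symm
  · intro hy hx
    exact hxy ⟨Perm.eq_inv_iff_eq.mpr hx, w.injective hy⟩
  · intro hy hx
    obtain rfl := w.injective hx
    have := Perm.eq_inv_iff_eq.mpr hy
    omega

lemma FinPerm.exists_bound {w : Perm ℕ} (hw : FinPerm w) : ∃ N, ∀ x, N < x → w x = x := by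
  obtain ⟨N, hN⟩ := hw.2.bddAbove
  exact ⟨N, fun x hx => by_contra fun hwx => hx.not_ge (hN hwx)⟩

lemma FinPerm.finite_inversions {w : Perm ℕ} (hw : FinPerm w) : (inversions w).Finite := by
  obtain ⟨N, hN⟩ := hw.exists_bound
  have hle : ∀ x ≤ N, w x ≤ N := fun x hx => by
    by_contra! hwx
    have := w.injective (hN _ hwx)
    omega
  refine ((Set.finite_Iic N).prod (Set.finite_Iic N)).subset fun ⟨x, y⟩ ⟨hxy, hinv⟩ => ?_
  change w y < w x at hinv
  by_contra! hy
  have hyN : N < y := by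
    simp only [Set.mem_prod, Set.mem_Iic, not_and_or, not_le] at hy
    omega
  rw [hN y hyN] at hinv
  by_cases hxN : N < x
  · rw [hN x hxN] at hinv
    omega
  · have := hle x (by omega)
    omega

lemma FinPerm.mul {σ τ : Perm ℕ} (hσ : FinPerm σ) (hτ : FinPerm τ) : FinPerm (σ * τ) :=
  ⟨by simp [hσ.1, hτ.1], (hσ.2.union hτ.2).subset (Perm.set_support_mul_subset σ τ)⟩

lemma finPerm_swap {a b : ℕ} (ha : 0 < a) (hb : 0 < b) : FinPerm (swap a b) := by
  refine ⟨swap_apply_of_ne_of_ne ha.ne hb.ne, (Set.toFinite {a, b}).subset fun x hx => ?_⟩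
  by_contra hab
  simp only [Set.mem_insert_iff, Set.mem_singleton_iff, not_or] at hab
  exact hx (swap_apply_of_ne_of_ne hab.1 hab.2)

def leftSuccPositions (w : Perm ℕ) : Set ℕ :=
  {i : ℕ | 0 < i ∧ w⁻¹ (w i + 1) < i}

/-- Without such a position, `w⁻¹` would be strictly increasing. -/
lemma leftSuccPositions_nonempty {w : Perm ℕ} (hne : w ≠ 1) : (leftSuccPositions w).Nonempty := by
  by_contra hempty
  refine hne (inv_eq_one.mp (Perm.eq_one_of_strictMono (strictMono_nat_of_lt_succ fun n => ?_)))
  have hne' : w⁻¹ n ≠ w⁻¹ (n + 1) := fun h => n.succ_ne_self (w⁻¹.injective h).symm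
  rcases Nat.eq_zero_or_pos (w⁻¹ n) with h0 | hpos
  · omega
  · have hnot : ¬ w⁻¹ (w (w⁻¹ n) + 1) < w⁻¹ n := fun h => hempty ⟨_, hpos, h⟩
    rw [show w (w⁻¹ n) = n from w.apply_symm_apply n] at hnot
    omega

lemma FinPerm.bddAbove_leftSuccPositions {w : Perm ℕ} (hw : FinPerm w) :
    BddAbove (leftSuccPositions w) := by
  obtain ⟨N, hN⟩ := hw.exists_bound
  refine ⟨N, fun i ⟨_, hi⟩ => by_contra fun hiN => ?_⟩
  have hinv : w⁻¹ (i + 1) = i + 1 := Perm.inv_eq_iff_eq.mpr (hN _ (by omega)).symm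
  rw [hN i (by omega), hinv] at hi
  omega

lemma FinPerm.iw_mem {w : Perm ℕ} (hw : FinPerm w) (hne : w ≠ 1) : iw w ∈ leftSuccPositions w :=
  Nat.sSup_mem (leftSuccPositions_nonempty hne) hw.bddAbove_leftSuccPositions

lemma FinPerm.le_iw {w : Perm ℕ} (hw : FinPerm w) {i : ℕ} (hi : i ∈ leftSuccPositions w) :
    i ≤ iw w :=
  le_csSup hw.bddAbove_leftSuccPositions hi

lemma inv_apply_succ_pos {w : Perm ℕ} (h0 : w 0 = 0) (a : ℕ) : 0 < w⁻¹ (a + 1) :=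
  Nat.pos_of_ne_zero fun h => a.succ_ne_zero (by rw [← h0, ← h]; exact (w.apply_symm_apply _).symm)

lemma phi_eq_mul_swap (w : Perm ℕ) : phi w = w * swap (iw w) (w⁻¹ (w (iw w) + 1)) := by
  rw [phi, swap_mul_eq_mul_swap, show w⁻¹ (w (iw w)) = iw w from w.symm_apply_apply _]

lemma finPerm_phi {w : Perm ℕ} (hw : FinPerm w) (hne : w ≠ 1) : FinPerm (phi w) := by
  have hpos : 0 < w (iw w) := Nat.pos_of_ne_zero fun h =>
    (hw.iw_mem hne).1.ne' (w.injective (h.trans hw.1.symm))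
  exact (finPerm_swap hpos (Nat.succ_pos _)).mul hw

lemma FinPerm.inversions_eq_insert_inversions_phi {w : Perm ℕ} (hw : FinPerm w) (hne : w ≠ 1) :
    inversions w = insert (w⁻¹ (w (iw w) + 1), iw w) (inversions (phi w)) :=
  inversions_eq_insert_inversions_swap_mul w (hw.iw_mem hne).2

lemma FinPerm.len_phi {w : Perm ℕ} (hw : FinPerm w) (hne : w ≠ 1) : len w = len (phi w) + 1 := by
  have hins := hw.inversions_eq_insert_inversions_phi hne
  have hnotMem : (w⁻¹ (w (iw w) + 1), iw w) ∉ inversions (phi w) := fun ⟨_, h⟩ => by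
    simp [phi] at h
  rw [len_eq_ncard_inversions, len_eq_ncard_inversions, hins, Set.ncard_insert_of_notMem hnotMem
    (hw.finite_inversions.subset (hins ▸ Set.subset_insert _ _))]

lemma FinPerm.descents_phi_subset {w : Perm ℕ} (hw : FinPerm w) (hne : w ≠ 1) :
    descents (phi w) ⊆ descents w :=
  descents_subset_of_inversions_subset
    (hw.inversions_eq_insert_inversions_phi hne ▸ Set.subset_insert _ _)

lemma FinPerm.kCover_phi {w : Perm ℕ} (hw : FinPerm w) (hne : w ≠ 1) :
    kCover (kappa w) (phi w) w := by
  obtain ⟨hi, hp⟩ := hw.iw_mem hne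
  refine ⟨w⁻¹ (w (iw w) + 1), iw w, inv_apply_succ_pos hw.1 _, by unfold kappa; omega, by unfold kappa; omega,
    ?_, hw.len_phi hne⟩
  rw [phi_eq_mul_swap, mul_assoc, swap_comm, swap_mul_self, mul_one]

lemma FinPerm.exists_descent_lt_iw {w : Perm ℕ} (hw : FinPerm w) (hne : w ≠ 1) :
    ∃ q ∈ descents w, q < iw w := by
  obtain ⟨hi, hp⟩ := hw.iw_mem hne
  obtain ⟨q, hpq, hqi, hq⟩ := exists_descent_of_lt (u := w) hp.le (by simp)
  exact ⟨q, ⟨(inv_apply_succ_pos hw.1 _).trans_le hpq, hq⟩, hqi⟩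

lemma FinPerm.d1_le_kappa_of_descents_subset {v w : Perm ℕ} (hv : FinPerm v) (hne : v ≠ 1)
    (h : descents v ⊆ descents w) : d1 w ≤ kappa v := by
  obtain ⟨q, hq, hqi⟩ := hv.exists_descent_lt_iw hne
  have := Nat.sInf_le (h hq)
  unfold kappa d1
  omega

/-- A position `j > i(w)` in `leftSuccPositions (φ w)` is already one for `w`: `φ` does not move
`w j`, and it moves `w j + 1` only if that value is `w i(w)`, which sits at `i(w) < j` in `w`. -/
lemma FinPerm.iw_phi_le {w : Perm ℕ} (hw : FinPerm w) (hne : w ≠ 1) (hne' : phi w ≠ 1) :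
    iw (phi w) ≤ iw w := by
  obtain ⟨hi, hp⟩ := hw.iw_mem hne
  obtain ⟨hj, hjl⟩ := (finPerm_phi hw hne).iw_mem hne'
  by_contra! hlt
  refine hlt.not_ge (hw.le_iw ⟨hj, ?_⟩)
  have hphi : ∀ x, x ≠ iw w → x ≠ w⁻¹ (w (iw w) + 1) → phi w x = w x := fun x h h' => by
    rw [phi_eq_mul_swap, Perm.mul_apply, swap_apply_of_ne_of_ne h h']
  have hvj := hphi (iw (phi w)) (by omega) (by omega)
  by_cases hb : w (iw (phi w)) + 1 = w (iw w)
  · rw [hb, show w⁻¹ (w (iw w)) = iw w from w.symm_apply_apply _]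
    exact hlt
  · have hphi_inv : ∀ y, y ≠ w (iw w) → y ≠ w (iw w) + 1 → (phi w)⁻¹ y = w⁻¹ y := fun y h h' => by
      rw [phi, mul_inv_rev, swap_inv, Perm.mul_apply, swap_apply_of_ne_of_ne h h']
    have hsucc : w (iw (phi w)) + 1 ≠ w (iw w) + 1 := fun h => by
      have := w.injective (Nat.succ_injective h)
      omega
    rwa [hvj, hphi_inv _ hb hsucc] at hjl

lemma FinPerm.eq_one_of_len_eq_zero {w : Perm ℕ} (hw : FinPerm w) (h : len w = 0) : w = 1 := by
  by_contra hne
  have := hw.len_phi hne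
  omega

lemma ne_one_of_len_ne_zero {w : Perm ℕ} (h : len w ≠ 0) : w ≠ 1 := by
  rintro rfl
  exact h len_one

lemma FinPerm.iterate_phi {w : Perm ℕ} (hw : FinPerm w) {n : ℕ} (hn : n ≤ len w) :
    FinPerm (phi^[n] w) ∧ len (phi^[n] w) = len w - n ∧ descents (phi^[n] w) ⊆ descents w := by
  induction n with
  | zero => exact ⟨hw, rfl, subset_rfl⟩
  | succ n ih =>
    obtain ⟨hfin, hlen, hdesc⟩ := ih (by omega)
    have hne := ne_one_of_len_ne_zero (w := phi^[n] w) (by omega)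
    have := hfin.len_phi hne
    rw [Function.iterate_succ_apply']
    exact ⟨finPerm_phi hfin hne, by omega, (hfin.descents_phi_subset hne).trans hdesc⟩

lemma FinPerm.iterate_phi_ne_one {w : Perm ℕ} (hw : FinPerm w) {n : ℕ} (hn : n < len w) :
    phi^[n] w ≠ 1 :=
  ne_one_of_len_ne_zero (by rw [(hw.iterate_phi hn.le).2.1]; omega)

lemma FinPerm.kappa_iterate_phi_succ_le {w : Perm ℕ} (hw : FinPerm w) {n : ℕ}
    (hn : n + 1 < len w) : kappa (phi^[n + 1] w) ≤ kappa (phi^[n] w) := by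
  have hne' := hw.iterate_phi_ne_one hn
  rw [Function.iterate_succ_apply'] at hne' ⊢
  exact Nat.sub_le_sub_right
    ((hw.iterate_phi (n := n) (by omega)).1.iw_phi_le (hw.iterate_phi_ne_one (by omega)) hne') 1

/-- The up-chain `ch↑(w)`: setting `w_j = φ^{ℓ-j}(w)`, the `w_j` form a mixed
chain from the identity to `w` with weakly increasing labels
`d₁(w) ≤ κ(w₁) ≤ ⋯ ≤ κ(w_ℓ) = κ(w)`. -/
theorem stmt8 (w : Equiv.Perm ℕ) (hw : FinPerm w) (hne : w ≠ 1) :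
    phi^[len w] w = 1 ∧
    (∀ j, 1 ≤ j → j ≤ len w →
      kCover (kappa (phi^[len w - j] w)) (phi^[len w - j + 1] w) (phi^[len w - j] w)) ∧
    d1 w ≤ kappa (phi^[len w - 1] w) ∧
    (∀ j, 1 ≤ j → j < len w →
      kappa (phi^[len w - j] w) ≤ kappa (phi^[len w - (j + 1)] w)) := by
  have hlen : 0 < len w := by
    have := hw.len_phi hne
    omega
  refine ⟨?_, fun j hj hjl => ?_, ?_, fun j hj hjl => ?_⟩
  · obtain ⟨hfin, hlen0, -⟩ := hw.iterate_phi le_rfl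
    exact hfin.eq_one_of_len_eq_zero (by omega)
  · rw [Function.iterate_succ_apply']
    exact (hw.iterate_phi (by omega)).1.kCover_phi (hw.iterate_phi_ne_one (by omega))
  · obtain ⟨hfin, -, hdesc⟩ := hw.iterate_phi (n := len w - 1) (by omega)
    exact hfin.d1_le_kappa_of_descents_subset (hw.iterate_phi_ne_one (by omega)) hdesc
  · rw [show len w - j = len w - (j + 1) + 1 by omega]
    exact hw.kappa_iterate_phi_succ_le (by omega)
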